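/- arXiv:1904.05579 — 3 statements merged into one kernel-verified Lean document; each statement's English description precedes it below -/
import Mathlib

section
/- For every finite-dimensional representation (U, ρ) of the Lie algebra 𝓛^x there exists an integer P such that ρ(𝓛^x_p) = 0 for all p ≥ P. -/
/-! The bracket of the degree-zero element `x_i d_γ` with `x^n d_γ` is `γ_i (n_i - 1) x^n d_γ`
plus terms of the same degree whose exponent of `x_i` is larger. As `ad ρ(x_i d_γ)` has only
finitely many eigenvalues and `γ_i ≠ 0`, downward induction on `n_i` within a fixed degree shows
that `ρ(x^n d_γ)` vanishes once `n_i` is large: otherwise it would be an eigenvector for the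
eigenvalue `γ_i (n_i - 1)`. Finally, every monomial of large enough degree has some large
exponent. -/

open scoped BigOperators

noncomputable section

/-- `subE v i = v - e_i` (with truncated subtraction in `ℕ^d`). -/
def subE {d : ℕ} (v : Fin d → ℕ) (i : Fin d) : Fin d → ℕ :=
  Function.update v i (v i - 1)

lemma subE_ne {d : ℕ} {m n : Fin d → ℕ} (hm : m ≠ 0) (hn : n ≠ 0) (i : Fin d) :
    subE (m + n) i ≠ 0 := by
  intro h
  obtain ⟨j, hj⟩ : ∃ j, m j ≠ 0 := by
    by_contra hc; push_neg at hc; exact hm (funext fun j => hc j)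
  obtain ⟨j', hj'⟩ : ∃ j', n j' ≠ 0 := by
    by_contra hc; push_neg at hc; exact hn (funext fun j => hc j)
  by_cases hji : j = i
  · by_cases hj'i : j' = i
    · rw [hji] at hj; rw [hj'i] at hj'
      have := congrFun h i
      simp only [subE, Function.update_self, Pi.add_apply, Pi.zero_apply] at this
      omega
    · have := congrFun h j'
      simp only [subE, Function.update_of_ne hj'i, Pi.add_apply, Pi.zero_apply] at this
      omega
  · have := congrFun h j
    simp only [subE, Function.update_of_ne hji, Pi.add_apply, Pi.zero_apply] at this
    omega

/-- The index `e_i ∈ ℕ^d ∖ {0}`. -/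
def eIdx {d : ℕ} (i : Fin d) : {m : Fin d → ℕ // m ≠ 0} :=
  ⟨fun j => if j = i then 1 else 0, by
    intro h
    have := congrFun h i
    simp at this⟩

/-- The defining bracket relations of the Lie algebra `𝓛^x`, spanned by the basis
`{x^m d_γ : m ∈ ℕ^d, m ≠ 0}` with `[x^m d_γ, x^n d_γ] = ∑ γ_i (n_i - m_i) x^{m+n-e_i} d_γ`. -/
def LxRel {d : ℕ} (γ : Fin d → ℂ) {Lx : Type*} [LieRing Lx] [LieAlgebra ℂ Lx]
    (b : Module.Basis {m : Fin d → ℕ // m ≠ 0} ℂ Lx) : Prop :=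
  ∀ m n : {m : Fin d → ℕ // m ≠ 0},
    ⁅b m, b n⁆ = ∑ i : Fin d,
      (γ i * ((n.1 i : ℂ) - (m.1 i : ℂ))) • b ⟨subE (m.1 + n.1) i, subE_ne m.2 n.2 i⟩

attribute [local instance 100] LieRing.ofAssociativeRing

open Filter Finset

theorem Module.End.eventually_not_hasEigenvalue {K V : Type*} [Field K] [AddCommGroup V]
    [Module K V] [FiniteDimensional K V] (f : Module.End K V) {g : ℕ → K}
    (hg : Function.Injective g) : ∀ᶠ s in atTop, ¬ f.HasEigenvalue (g s) := by
  rw [← Nat.cofinite_eq_atTop, eventually_cofinite]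
  simpa using f.finite_hasEigenvalue.preimage hg.injOn

lemma eIdx_coe {d : ℕ} (i : Fin d) : (eIdx i).1 = Pi.single i 1 := by
  funext j
  simp [eIdx, Pi.single_apply]

lemma subE_apply_of_ne {d : ℕ} (v : Fin d → ℕ) {i k : Fin d} (h : i ≠ k) : subE v k i = v i :=
  Function.update_of_ne h _ _

lemma sum_subE_add_one {d : ℕ} (v : Fin d → ℕ) {k : Fin d} (h : v k ≠ 0) :
    ∑ l, subE v k l + 1 = ∑ l, v l := by
  rw [subE, sum_update_of_mem (mem_univ k), ← add_sum_erase _ _ (mem_univ k),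
    sdiff_singleton_eq_erase]
  omega

lemma subE_single_add_self {d : ℕ} (n : Fin d → ℕ) (i : Fin d) :
    subE (Pi.single i 1 + n) i = n := by
  funext j
  rcases eq_or_ne j i with rfl | hj
  · simp [subE]
  · simp [subE_apply_of_ne _ hj, hj]

section

variable {d : ℕ} {γ : Fin d → ℂ} {Lx : Type*} [LieRing Lx] [LieAlgebra ℂ Lx]
  {b : Module.Basis {m : Fin d → ℕ // m ≠ 0} ℂ Lx} {A : Type*} [LieRing A] [LieAlgebra ℂ A]

lemma lie_map_eIdx_eq_smul (hb : LxRel γ b) (ρ : Lx →ₗ⁅ℂ⁆ A) (i : Fin d)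
    (n : {m : Fin d → ℕ // m ≠ 0})
    (h : ∀ n' : {m : Fin d → ℕ // m ≠ 0},
      ∑ l, n'.1 l = ∑ l, n.1 l → n.1 i < n'.1 i → ρ (b n') = 0) :
    ⁅ρ (b (eIdx i)), ρ (b n)⁆ = (γ i * ((n.1 i : ℂ) - 1)) • ρ (b n) := by
  rw [← LieHom.map_lie, hb, ← LieHom.coe_toLinearMap, map_sum,
    sum_eq_single_of_mem i (mem_univ i)]
  · simp [eIdx_coe, subE_single_add_self]
  intro k _ hki
  rcases eq_or_ne (n.1 k) 0 with hnk | hnk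
  · simp [hnk, eIdx_coe, hki]
  have hsum : ∑ l, subE ((eIdx i).1 + n.1) k l = ∑ l, n.1 l := by
    have := sum_subE_add_one ((eIdx i).1 + n.1) (k := k) (by simp [hnk])
    simp only [eIdx_coe, Pi.add_apply, sum_add_distrib, sum_pi_single', mem_univ, if_true]
      at this ⊢
    omega
  rw [map_smul, LieHom.coe_toLinearMap,
    h _ hsum (by simp [subE_apply_of_ne _ hki.symm, eIdx_coe]), smul_zero]

lemma map_basis_eq_zero_of_not_hasEigenvalue (hb : LxRel γ b) (ρ : Lx →ₗ⁅ℂ⁆ A) (i : Fin d)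
    {N : ℕ} (hN : ∀ s, N ≤ s →
      ¬ (LieAlgebra.ad ℂ A (ρ (b (eIdx i)))).HasEigenvalue (γ i * ((s : ℂ) - 1)))
    (n : {m : Fin d → ℕ // m ≠ 0}) (hn : N ≤ n.1 i) : ρ (b n) = 0 := by
  induction h : ∑ l, n.1 l - n.1 i using Nat.strong_induction_on generalizing n with
  | _ r ih =>
  by_contra hne
  refine hN (n.1 i) hn (Module.End.hasEigenvalue_of_hasEigenvector
    ⟨Module.End.mem_eigenspace_iff.2 (lie_map_eIdx_eq_smul hb ρ i n fun n' hsum hlt => ?_), hne⟩)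
  have := single_le_sum (fun l _ => Nat.zero_le (n'.1 l)) (mem_univ i)
  exact ih _ (by omega) n' (hn.trans hlt.le) rfl

end

theorem stmt4_general (d : ℕ) (γ : Fin d → ℂ) (hγ : LinearIndependent ℚ γ)
    (Lx : Type*) [LieRing Lx] [LieAlgebra ℂ Lx]
    (b : Module.Basis {m : Fin d → ℕ // m ≠ 0} ℂ Lx) (hb : LxRel γ b)
    (U : Type*) [AddCommGroup U] [Module ℂ U] [FiniteDimensional ℂ U]
    (ρ : Lx →ₗ⁅ℂ⁆ Module.End ℂ U) :
    ∃ P : ℕ, ∀ p : ℕ, P ≤ p →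
      ∀ m : {m : Fin d → ℕ // m ≠ 0}, (∑ l, m.1 l) = p + 1 → ρ (b m) = 0 := by
  have hinj (i : Fin d) : Function.Injective fun s : ℕ => γ i * ((s : ℂ) - 1) := fun s t hst => by
    simpa using mul_left_cancel₀ (hγ.ne_zero i) hst
  obtain ⟨N, hN⟩ := eventually_atTop.1 <| eventually_all.2 fun i =>
    (LieAlgebra.ad ℂ _ (ρ (b (eIdx i)))).eventually_not_hasEigenvalue (hinj i)
  refine ⟨d * N, fun p hp m hm => ?_⟩
  obtain ⟨i, -, hi⟩ := exists_lt_of_sum_lt (s := univ) (f := fun _ => N) (g := m.1)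
    (by simp only [sum_const, card_univ, Fintype.card_fin, smul_eq_mul]; omega)
  exact map_basis_eq_zero_of_not_hasEigenvalue hb ρ i (fun s hs => hN s hs i) m hi.le

/-- Theorem 4.1(2).  Every finite-dimensional representation `(U, ρ)` of
the Lie algebra `𝓛^x` satisfies `ρ(𝓛^x_p) = 0` for all sufficiently large `p`; recall
`𝓛^x_p = span{x^m d_γ : |m| = p + 1}`. -/
theorem stmt4 (d : ℕ) (hd : 0 < d) (γ : Fin d → ℂ) (hγ : LinearIndependent ℚ γ)
    (Lx : Type*) [LieRing Lx] [LieAlgebra ℂ Lx]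
    (b : Module.Basis {m : Fin d → ℕ // m ≠ 0} ℂ Lx) (hb : LxRel γ b)
    (U : Type*) [AddCommGroup U] [Module ℂ U] [FiniteDimensional ℂ U]
    (ρ : Lx →ₗ⁅ℂ⁆ Module.End ℂ U) :
    ∃ P : ℕ, ∀ p : ℕ, P ≤ p →
      ∀ m : {m : Fin d → ℕ // m ≠ 0}, (∑ l, m.1 l) = p + 1 → ρ (b m) = 0 :=
  stmt4_general d γ hγ Lx b hb U ρ
end
end

section
/- For every finite-dimensional representation (U, ρ) of the Lie algebra 𝓛 there exists an integer P such that ρ(𝓛_p) = 0 for all p ≥ P. -/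
open scoped BigOperators

noncomputable section

/-- The index `2i-1` (1-based), i.e. `2i` (0-based). -/
def p1 {d z : ℕ} (h : 2*z ≤ d) (i : Fin z) : Fin d := ⟨2*(i:ℕ), by have := i.2; omega⟩

/-- The index `2i` (1-based), i.e. `2i+1` (0-based). -/
def p2 {d z : ℕ} (h : 2*z ≤ d) (i : Fin z) : Fin d := ⟨2*(i:ℕ)+1, by have := i.2; omega⟩

/-- `σ(m,n) = ∏_i q_i^{n_{2i} m_{2i-1}}`. -/
def qsigma {d z : ℕ} (h : 2*z ≤ d) (q : Fin z → ℂ) (m n : Fin d → ℤ) : ℂ :=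
  ∏ i : Fin z, q i ^ (n (p2 h i) * m (p1 h i))

/-- The subgroup `R = ⊕ (ℤ k_i e_{2i-1} ⊕ ℤ k_i e_{2i}) ⊕ ⊕_{l > 2z} ℤ e_l` of `ℤ^d`. -/
def Rgrp {d z : ℕ} (h : 2*z ≤ d) (k : Fin z → ℕ) : AddSubgroup (Fin d → ℤ) where
  carrier := {m | ∀ i : Fin z, ((k i : ℤ) ∣ m (p1 h i)) ∧ ((k i : ℤ) ∣ m (p2 h i))}
  zero_mem' := fun i => ⟨dvd_zero _, dvd_zero _⟩
  add_mem' := fun ha hb i => ⟨dvd_add (ha i).1 (hb i).1, dvd_add (ha i).2 (hb i).2⟩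
  neg_mem' := fun ha i => ⟨dvd_neg.mpr (ha i).1, dvd_neg.mpr (ha i).2⟩

/-- Membership in the set `Γ₀` of distinguished coset representatives for `ℤ^d/R`. -/
def inGamma0 {d z : ℕ} (h : 2*z ≤ d) (k : Fin z → ℕ) (n : Fin d → ℤ) : Prop :=
  (∀ i : Fin z, 0 ≤ n (p1 h i) ∧ n (p1 h i) < k i ∧ 0 ≤ n (p2 h i) ∧ n (p2 h i) < k i) ∧
  ∀ l : Fin d, 2*z ≤ (l:ℕ) → n l = 0

/-- The representative in `Γ₀` of the coset `n + R`. -/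
def repZ {d z : ℕ} (h : 2*z ≤ d) (k : Fin z → ℕ) (n : Fin d → ℤ) : Fin d → ℤ :=
  fun l => if hl : (l:ℕ) < 2*z then n l % (k ⟨(l:ℕ)/2, by omega⟩ : ℤ) else 0

/-- `(γ|m) = ∑ γ_i m_i`. -/
def ginner {d : ℕ} (γ : Fin d → ℂ) (m : Fin d → ℤ) : ℂ := ∑ i, γ i * (m i : ℂ)

/-- The matrix `X^n = ⊗_i X_{2i-1}^{n_{2i-1}} X_{2i}^{n_{2i}} ∈ gl_N`, realized on the
index set `∏_i Fin (k_i)` (of cardinality `N = k_1 ⋯ k_z`). -/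
def Xmat {d z : ℕ} (h : 2*z ≤ d) (k : Fin z → ℕ) (q : Fin z → ℂ) (n : Fin d → ℤ) :
    Matrix ((i : Fin z) → Fin (k i)) ((i : Fin z) → Fin (k i)) ℂ :=
  Matrix.of fun j l => ∏ i : Fin z,
    (q i ^ (n (p1 h i) * (j i : ℤ)) *
      (if (l i : ℤ) = ((j i : ℤ) + n (p2 h i)) % (k i) then 1 else 0))

lemma repZ_mem {d z : ℕ} (h : 2*z ≤ d) (k : Fin z → ℕ) (hk : ∀ i, 0 < k i)
    (n : Fin d → ℤ) : inGamma0 h k (repZ h k n) := by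
  constructor
  · intro i
    have h1 : ((p1 h i : ℕ)) < 2*z := by simp only [p1]; have := i.2; omega
    have h2 : ((p2 h i : ℕ)) < 2*z := by simp only [p2]; have := i.2; omega
    have e1 : (⟨((p1 h i : ℕ))/2, by omega⟩ : Fin z) = i := by
      apply Fin.ext; simp only [p1]; omega
    have e2 : (⟨((p2 h i : ℕ))/2, by omega⟩ : Fin z) = i := by
      apply Fin.ext; simp only [p2]; omega
    have hk' : (0:ℤ) < (k i : ℤ) := by exact_mod_cast hk i
    refine ⟨?_, ?_, ?_, ?_⟩ <;> simp only [repZ, dif_pos h1, dif_pos h2, e1, e2]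
    · exact Int.emod_nonneg _ (by exact_mod_cast (hk i).ne')
    · exact Int.emod_lt_of_pos _ hk'
    · exact Int.emod_nonneg _ (by exact_mod_cast (hk i).ne')
    · exact Int.emod_lt_of_pos _ hk'
  · intro l hl
    simp only [repZ, dif_neg (by omega : ¬ (l:ℕ) < 2*z)]

/-- A family of operators is a weight module with uniformly bounded finite-dimensional
weight spaces (cuspidality), with respect to the Cartan operator `L0`. -/
def IsCuspidalFor {M : Type*} [AddCommGroup M] [Module ℂ M] (L0 : Module.End ℂ M) : Prop :=
  ((⨆ c : ℂ, Module.End.eigenspace L0 c) = ⊤) ∧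
  (∀ c : ℂ, FiniteDimensional ℂ (Module.End.eigenspace L0 c)) ∧
  ∃ B : ℕ, ∀ c : ℂ, Module.finrank ℂ (Module.End.eigenspace L0 c) ≤ B

/-- The defining bracket relations of the solenoidal Lie algebra `g` over the rational
quantum torus, for a family of operators `L` (i.e. `M` is a `g`-module). -/
def GRel {d z : ℕ} (h : 2*z ≤ d) (k : Fin z → ℕ) (q : Fin z → ℂ) (γ : Fin d → ℂ)
    {M : Type*} [AddCommGroup M] [Module ℂ M] (L : (Fin d → ℤ) → Module.End ℂ M) : Prop :=
  (∀ m n, m ∈ Rgrp h k → n ∈ Rgrp h k → ⁅L m, L n⁆ = (ginner γ (n - m)) • L (m + n)) ∧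
  (∀ m s, m ∈ Rgrp h k → s ∉ Rgrp h k → ⁅L m, L s⁆ = (ginner γ s) • L (m + s)) ∧
  (∀ r s, r ∉ Rgrp h k → s ∉ Rgrp h k →
    ⁅L r, L s⁆ = (qsigma h q r s - qsigma h q s r) • L (r + s))

/-- The relations making `(L, T)` a `Zg`-module structure: `Z` acts associatively and the
semidirect-product brackets `[L_m, t^n] = (γ|n) t^{m+n}`, `[L_r, t^n] = 0` hold. -/
def ZRel {d z : ℕ} (h : 2*z ≤ d) (k : Fin z → ℕ) (γ : Fin d → ℂ)
    {M : Type*} [AddCommGroup M] [Module ℂ M] (L T : (Fin d → ℤ) → Module.End ℂ M) : Prop :=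
  (∀ m n, m ∈ Rgrp h k → n ∈ Rgrp h k → T m * T n = T (m + n)) ∧
  (T 0 = 1) ∧
  (∀ m n, m ∈ Rgrp h k → n ∈ Rgrp h k → ⁅L m, T n⁆ = (ginner γ n) • T (m + n)) ∧
  (∀ r n, r ∉ Rgrp h k → n ∈ Rgrp h k → ⁅L r, T n⁆ = 0)

/-- Defining bracket relations of the Lie algebra `𝓛` on its basis
`{x^m d_γ : m ∈ ℕ^d, m ≠ 0} ∪ {x^n t̄^s̄ : n ∈ ℕ^d, s̄ ∈ Γ}` (the group `Γ = ℤ^d/R` being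
identified with its set `Γ₀` of distinguished representatives). -/
def LLRel {d z : ℕ} (h : 2*z ≤ d) (k : Fin z → ℕ) (hk : ∀ i, 0 < k i)
    (q : Fin z → ℂ) (γ : Fin d → ℂ)
    {LL : Type*} [LieRing LL] [LieAlgebra ℂ LL]
    (b : Module.Basis ({m : Fin d → ℕ // m ≠ 0} ⊕
      ((Fin d → ℕ) × {s : Fin d → ℤ // inGamma0 h k s})) ℂ LL) : Prop :=
  (∀ m n : {m : Fin d → ℕ // m ≠ 0},
    ⁅b (Sum.inl m), b (Sum.inl n)⁆ = ∑ i : Fin d,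
      (γ i * ((n.1 i : ℂ) - (m.1 i : ℂ))) •
        b (Sum.inl ⟨subE (m.1 + n.1) i, subE_ne m.2 n.2 i⟩)) ∧
  (∀ (m : {m : Fin d → ℕ // m ≠ 0}) (l : Fin d → ℕ)
      (s : {s : Fin d → ℤ // inGamma0 h k s}),
    ⁅b (Sum.inl m), b (Sum.inr (l, s))⁆ =
      (∑ i : Fin d, (γ i * (l i : ℂ)) • b (Sum.inr (subE (m.1 + l) i, s))) +
        (ginner γ s.1) • b (Sum.inr (m.1 + l, s))) ∧
  (∀ (p l : Fin d → ℕ) (r s : {s : Fin d → ℤ // inGamma0 h k s}),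
    ⁅b (Sum.inr (p, r)), b (Sum.inr (l, s))⁆ =
      (qsigma h q r.1 s.1 - qsigma h q s.1 r.1) •
        b (Sum.inr (p + l, ⟨repZ h k (r.1 + s.1), repZ_mem h k hk _⟩)))

/-- The matrix `e_i γ^T ∈ gl_d(ℂ)`: the `d × d` matrix whose `i`-th row is `γ` and whose
other rows vanish. -/
def rowMat {d : ℕ} (γ : Fin d → ℂ) (i : Fin d) : Matrix (Fin d) (Fin d) ℂ :=
  Matrix.of fun a b => if a = i then γ b else 0

attribute [local instance 100] LieRing.ofAssociativeRing

/-!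
`ad (x^{e_i} d_γ)` acts on `x^{(n+1) e_i} d_γ` by the scalar `γ_i n`. These scalars are pairwise
distinct because `γ_i ≠ 0`, while an endomorphism of the finite-dimensional space `End U` has only
finitely many eigenvalues; hence `ρ(x^{(n+1) e_i} d_γ) = 0` for `n ≥ N`. Subtracting
`[x^{(N+2) e_i} d_γ, x^m d_γ]` from `[x^{(N+1) e_i} d_γ, x^{m + e_i} d_γ]` leaves
`2 γ_i x^{(N+1) e_i + m} d_γ`, so `ρ(x^v d_γ) = 0` as soon as some `v_i > N + 1`. For such `v`,
bracketing `x^v d_γ` with `x^{e_i} t̄^s` when `(γ|s) = 0`, and with `t̄^s` otherwise, gives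
`ρ(x^v t̄^s) = 0`. Every exponent of total degree `> d (N + 1)` has such a coordinate.
-/

theorem Module.End.eventually_eq_zero_of_apply_eq_smul {K V : Type*} [Field K] [AddCommGroup V]
    [Module K V] [FiniteDimensional K V] (f : Module.End K V) {μ : ℕ → K}
    (hμ : Function.Injective μ) {v : ℕ → V} (hv : ∀ n, f (v n) = μ n • v n) :
    ∀ᶠ n in Filter.atTop, v n = 0 := by
  rw [← Nat.cofinite_eq_atTop, Filter.eventually_cofinite]
  refine ((Module.End.finite_hasEigenvalue f).preimage hμ.injOn).subset fun n hn => ?_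
  exact Module.End.hasEigenvalue_of_hasEigenvector ⟨Module.End.mem_eigenspace_iff.mpr (hv n), hn⟩

theorem exists_lt_apply_of_mul_lt_sum {d N : ℕ} {v : Fin d → ℕ} (h : d * N < ∑ l, v l) :
    ∃ i, N < v i := by
  obtain ⟨i, -, hi⟩ := Finset.exists_lt_of_sum_lt (s := Finset.univ) (f := fun _ => N) (g := v)
    (by simpa using h)
  exact ⟨i, hi⟩

theorem subE_add_single_self {d : ℕ} (v : Fin d → ℕ) (i : Fin d) :
    subE (v + Pi.single i 1) i = v := by
  ext j
  rcases eq_or_ne j i with rfl | hj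
  · simp [subE]
  · simp [subE, hj]

section Brackets

variable {K : Type*} [Field K] {L L' : Type*} [LieRing L] [LieAlgebra K L] [LieRing L']
  [LieAlgebra K L'] {d : ℕ} (γ : Fin d → K)

/-- `e m` obeys the bracket of `x^m d_γ` in `𝓛`. -/
def HasWittBrackets (e : {m : Fin d → ℕ // m ≠ 0} → L) : Prop :=
  ∀ m n, ⁅e m, e n⁆ = ∑ i : Fin d,
    (γ i * ((n.1 i : K) - (m.1 i : K))) • e ⟨subE (m.1 + n.1) i, subE_ne m.2 n.2 i⟩

/-- `x^m d_γ ↦ e m` acts on `x^l t̄^s ↦ t l s` as in `𝓛`, with `g s` in the role of `(γ|s)`. -/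
def HasTorusBrackets {S : Type*} (g : S → K) (e : {m : Fin d → ℕ // m ≠ 0} → L)
    (t : (Fin d → ℕ) → S → L) : Prop :=
  ∀ m l s, ⁅e m, t l s⁆ =
    (∑ i : Fin d, (γ i * (l i : K)) • t (subE (m.1 + l) i) s) + g s • t (m.1 + l) s

variable {γ} {e : {m : Fin d → ℕ // m ≠ 0} → L}

theorem HasWittBrackets.map (he : HasWittBrackets γ e) (f : L →ₗ⁅K⁆ L') :
    HasWittBrackets γ (fun m => f (e m)) := by
  intro m n
  rw [← LieHom.map_lie, he, map_sum]
  simp only [map_smul]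

theorem HasTorusBrackets.map {S : Type*} {g : S → K} {t : (Fin d → ℕ) → S → L}
    (ht : HasTorusBrackets γ g e t) (f : L →ₗ⁅K⁆ L') :
    HasTorusBrackets γ g (fun m => f (e m)) (fun l s => f (t l s)) := by
  intro m l s
  rw [← LieHom.map_lie, ht, map_add, map_sum]
  simp only [map_smul]

theorem HasWittBrackets.lie_single_one_single (he : HasWittBrackets γ e) (i : Fin d) (n : ℕ) :
    ⁅e ⟨Pi.single i 1, by simp⟩, e ⟨Pi.single i (n + 1), by simp⟩⁆ =
      (γ i * n) • e ⟨Pi.single i (n + 1), by simp⟩ := by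
  rw [he, Finset.sum_eq_single i (fun j _ hj => by simp [hj]) (by simp)]
  have hidx : subE (Pi.single i 1 + Pi.single i (n + 1)) i = Pi.single i (n + 1) := by
    rw [add_comm]; exact subE_add_single_self _ _
  simp only [hidx, Pi.single_eq_same, Nat.cast_add, Nat.cast_one, add_sub_cancel_right]

theorem HasWittBrackets.single_add_eq_zero [CharZero K] (he : HasWittBrackets γ e) {i : Fin d}
    (hγ : γ i ≠ 0) {N : ℕ} (h₁ : e ⟨Pi.single i (N + 1), by simp⟩ = 0)
    (h₂ : e ⟨Pi.single i (N + 2), by simp⟩ = 0) (m : {m : Fin d → ℕ // m ≠ 0}) :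
    e ⟨Pi.single i (N + 1) + m.1, by simp [m.2]⟩ = 0 := by
  have hm : m.1 + Pi.single i 1 ≠ 0 := by simp [m.2]
  have hv : Pi.single i (N + 1) + (m.1 + Pi.single i 1) = Pi.single i (N + 2) + m.1 := by
    ext j; rcases eq_or_ne j i with rfl | hj <;> simp [*]; omega
  have hsub : subE (Pi.single i (N + 2) + m.1) i = Pi.single i (N + 1) + m.1 := by
    rw [← hv, ← add_assoc]; exact subE_add_single_self _ _
  have h₁' := he ⟨Pi.single i (N + 1), by simp⟩ ⟨m.1 + Pi.single i 1, hm⟩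
  have h₂' := he ⟨Pi.single i (N + 2), by simp⟩ m
  simp only [hv, h₁, zero_lie] at h₁'
  rw [h₂, zero_lie] at h₂'
  -- both brackets expand over the same vectors; the coefficients differ only at `i`, by `2 γ i`
  have hdiff := congrArg₂ (· - ·) h₁' h₂'
  simp only [sub_zero, ← Finset.sum_sub_distrib, ← sub_smul] at hdiff
  rw [Finset.sum_eq_single i (fun j _ hj => by simp [hj]) (by simp)] at hdiff
  simp only [hsub, Pi.add_apply, Pi.single_eq_same] at hdiff
  refine (smul_eq_zero.mp hdiff.symm).resolve_left ?_
  convert mul_ne_zero (two_ne_zero' K) hγ using 2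
  push_cast
  ring

theorem HasWittBrackets.eq_zero_of_lt_apply [CharZero K] (he : HasWittBrackets γ e) {i : Fin d}
    (hγ : γ i ≠ 0) {N : ℕ} (h₁ : e ⟨Pi.single i (N + 1), by simp⟩ = 0)
    (h₂ : e ⟨Pi.single i (N + 2), by simp⟩ = 0) (v : {m : Fin d → ℕ // m ≠ 0})
    (hv : N + 1 < v.1 i) : e v = 0 := by
  have hw : v.1 - Pi.single i (N + 1) ≠ 0 := fun h => by
    have := congrFun h i; simp at this; omega
  have hvw : v = ⟨Pi.single i (N + 1) + (v.1 - Pi.single i (N + 1)), by simp⟩ :=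
    Subtype.ext <| by ext j; rcases eq_or_ne j i with rfl | hj <;> simp [*]; omega
  rw [hvw]
  exact he.single_add_eq_zero hγ h₁ h₂ ⟨_, hw⟩

theorem HasWittBrackets.eventually_single_eq_zero {U : Type*} [AddCommGroup U] [Module K U]
    [FiniteDimensional K U] [CharZero K] {e : {m : Fin d → ℕ // m ≠ 0} → Module.End K U}
    (he : HasWittBrackets γ e) {i : Fin d} (hγ : γ i ≠ 0) :
    ∀ᶠ n in Filter.atTop, e ⟨Pi.single i (n + 1), by simp⟩ = 0 :=
  (LieAlgebra.ad K _ (e ⟨Pi.single i 1, by simp⟩)).eventually_eq_zero_of_apply_eq_smul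
    (fun _ _ h => by exact_mod_cast mul_left_cancel₀ hγ h) (he.lie_single_one_single i)

theorem HasWittBrackets.exists_eq_zero_of_lt_apply {U : Type*} [AddCommGroup U] [Module K U]
    [FiniteDimensional K U] [CharZero K] {e : {m : Fin d → ℕ // m ≠ 0} → Module.End K U}
    (he : HasWittBrackets γ e) (hγ : ∀ i, γ i ≠ 0) :
    ∃ N, ∀ (v : {m : Fin d → ℕ // m ≠ 0}) (i : Fin d), N < v.1 i → e v = 0 := by
  obtain ⟨N, hN⟩ := Filter.eventually_atTop.mp
    (Filter.eventually_all.mpr fun i => he.eventually_single_eq_zero (hγ i))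
  exact ⟨N + 1, fun v i hv => he.eq_zero_of_lt_apply (hγ i) (hN N le_rfl i)
    (hN (N + 1) (by omega) i) v hv⟩

theorem HasTorusBrackets.eq_zero_of_witt_eq_zero {S : Type*} {g : S → K}
    {t : (Fin d → ℕ) → S → L} (ht : HasTorusBrackets γ g e t) {i : Fin d} (hγ : γ i ≠ 0)
    {n : Fin d → ℕ} (hn : n ≠ 0) (he : e ⟨n, hn⟩ = 0) (s : S) : t n s = 0 := by
  by_cases hg : g s = 0
  · have h := ht ⟨n, hn⟩ (Pi.single i 1) s
    rw [he, zero_lie, hg, zero_smul, add_zero,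
      Finset.sum_eq_single i (fun j _ hj => by simp [hj]) (by simp)] at h
    simp only [subE_add_single_self, Pi.single_eq_same, Nat.cast_one, mul_one] at h
    exact (smul_eq_zero.mp h.symm).resolve_left hγ
  · have h := ht ⟨n, hn⟩ 0 s
    simp only [he, zero_lie, Pi.zero_apply, Nat.cast_zero, mul_zero, zero_smul,
      Finset.sum_const_zero, zero_add, add_zero] at h
    exact (smul_eq_zero.mp h.symm).resolve_left hg

end Brackets

/-- Theorem 4.1(4).  Every finite-dimensional representation `(U, ρ)` of
the Lie algebra `𝓛` satisfies `ρ(𝓛_p) = 0` for all sufficiently large `p`; recall that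
`𝓛_p = span{x^m d_γ : |m| = p+1} ⊕ span{x^n t̄^s̄ : |n| = p, s̄ ∈ Γ}`. -/
theorem stmt6 (d z : ℕ) (h2z : 2*z ≤ d)
    (k : Fin z → ℕ) (hk : ∀ i, 0 < k i)
    (q : Fin z → ℂ)
    (γ : Fin d → ℂ) (hγ : LinearIndependent ℚ γ)
    (LL : Type*) [LieRing LL] [LieAlgebra ℂ LL]
    (b : Module.Basis ({m : Fin d → ℕ // m ≠ 0} ⊕
      ((Fin d → ℕ) × {s : Fin d → ℤ // inGamma0 h2z k s})) ℂ LL)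
    (hb : LLRel h2z k hk q γ b)
    (U : Type*) [AddCommGroup U] [Module ℂ U] [FiniteDimensional ℂ U]
    (ρ : LL →ₗ⁅ℂ⁆ Module.End ℂ U) :
    ∃ P : ℕ, ∀ p : ℕ, P ≤ p →
      (∀ m : {m : Fin d → ℕ // m ≠ 0}, (∑ l, m.1 l) = p + 1 → ρ (b (Sum.inl m)) = 0) ∧
      (∀ (n : Fin d → ℕ) (s : {s : Fin d → ℤ // inGamma0 h2z k s}),
        (∑ l, n l) = p → ρ (b (Sum.inr (n, s))) = 0) := by
  have hγ₀ : ∀ i, γ i ≠ 0 := hγ.ne_zero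
  have he := HasWittBrackets.map (e := fun m => b (Sum.inl m)) hb.1 ρ
  have ht := HasTorusBrackets.map (S := {s : Fin d → ℤ // inGamma0 h2z k s})
    (g := fun s => ginner γ s.1) (e := fun m => b (Sum.inl m))
    (t := fun n s => b (Sum.inr (n, s))) hb.2.1 ρ
  obtain ⟨N, hN⟩ := he.exists_eq_zero_of_lt_apply hγ₀
  refine ⟨d * N + 1, fun p hp => ⟨fun m hm => ?_, fun n s hn => ?_⟩⟩
  · obtain ⟨i, hi⟩ := exists_lt_apply_of_mul_lt_sum (N := N) (v := m.1) (by omega)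
    exact hN m i hi
  · obtain ⟨i, hi⟩ := exists_lt_apply_of_mul_lt_sum (N := N) (v := n) (by omega)
    have hn₀ : n ≠ 0 := fun h => by simp [h] at hi
    exact ht.eq_zero_of_witt_eq_zero (hγ₀ i) hn₀ (hN ⟨n, hn₀⟩ i hi) s
end
end

section
/- Let M be a cuspidal g-module. The tensor product g_R' ⊗ M, equipped with the g-action X·(y ⊗ v) = [X,y] ⊗ v + y ⊗ (X·v) (X ∈ g, y ∈ g_R', v ∈ M) and the Z-action t^n·(L_s ⊗ v) = L_{n+s} ⊗ v (n ∈ R, s ∉ R, v ∈ M), is a Zg-module. -/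
open scoped BigOperators

noncomputable section

open scoped TensorProduct

lemma add_not_mem_R {d z : ℕ} (h : 2*z ≤ d) (k : Fin z → ℕ) {m s : Fin d → ℤ}
    (hm : m ∈ Rgrp h k) (hs : s ∉ Rgrp h k) : m + s ∉ Rgrp h k :=
  fun hc => hs (by simpa using add_mem (neg_mem hm) hc)

/-- The action of `g ⋉ Z` on `g_R' ⊗ M` from Lemma 6.2: `g` acts by
`X·(y ⊗ v) = [X,y] ⊗ v + y ⊗ (X·v)` and `Z` acts by `t^n·(L_s ⊗ v) = L_{n+s} ⊗ v`.
Here `G'` is the ideal `g_R' = span{L_s : s ∉ R}` with basis `c`, `M` a `g`-module with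
action operators `LM`, and the brackets `[L_x, L_s]` have been expanded using the
structure constants of `g`. -/
def TPAction {d z : ℕ} (h : 2*z ≤ d) (k : Fin z → ℕ) (q : Fin z → ℂ) (γ : Fin d → ℂ)
    {G' M : Type*} [AddCommGroup G'] [Module ℂ G'] [AddCommGroup M] [Module ℂ M]
    (c : Module.Basis {s : Fin d → ℤ // s ∉ Rgrp h k} ℂ G')
    (LM : (Fin d → ℤ) → Module.End ℂ M)
    (Lt Tt : (Fin d → ℤ) → Module.End ℂ (G' ⊗[ℂ] M)) : Prop :=
  (∀ m (hm : m ∈ Rgrp h k), ∀ s (hs : s ∉ Rgrp h k), ∀ v : M,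
    Lt m (c ⟨s, hs⟩ ⊗ₜ[ℂ] v)
      = (ginner γ s) • (c ⟨m + s, add_not_mem_R h k hm hs⟩ ⊗ₜ[ℂ] v)
        + c ⟨s, hs⟩ ⊗ₜ[ℂ] (LM m v)) ∧
  (∀ r (_ : r ∉ Rgrp h k), ∀ s (hs : s ∉ Rgrp h k), ∀ (hrs : r + s ∉ Rgrp h k), ∀ v : M,
    Lt r (c ⟨s, hs⟩ ⊗ₜ[ℂ] v)
      = (qsigma h q r s - qsigma h q s r) • (c ⟨r + s, hrs⟩ ⊗ₜ[ℂ] v)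
        + c ⟨s, hs⟩ ⊗ₜ[ℂ] (LM r v)) ∧
  (∀ r (_ : r ∉ Rgrp h k), ∀ s (hs : s ∉ Rgrp h k), r + s ∈ Rgrp h k → ∀ v : M,
    Lt r (c ⟨s, hs⟩ ⊗ₜ[ℂ] v) = c ⟨s, hs⟩ ⊗ₜ[ℂ] (LM r v)) ∧
  (∀ n (hn : n ∈ Rgrp h k), ∀ s (hs : s ∉ Rgrp h k), ∀ v : M,
    Tt n (c ⟨s, hs⟩ ⊗ₜ[ℂ] v) = c ⟨n + s, add_not_mem_R h k hn hs⟩ ⊗ₜ[ℂ] v)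

/-- The subspace `J ⊆ g_R' ⊗ M` spanned by the finite sums `∑_s L_s ⊗ v_s` (over
`s ∉ R`) such that `∑_s L_{n+s} v_s = 0` for every `n ∈ R`. -/
def Jsub {d z : ℕ} (h : 2*z ≤ d) (k : Fin z → ℕ)
    {G' M : Type*} [AddCommGroup G'] [Module ℂ G'] [AddCommGroup M] [Module ℂ M]
    (c : Module.Basis {s : Fin d → ℤ // s ∉ Rgrp h k} ℂ G')
    (LM : (Fin d → ℤ) → Module.End ℂ M) : Submodule ℂ (G' ⊗[ℂ] M) :=
  Submodule.span ℂ {w : G' ⊗[ℂ] M | ∃ f : {s : Fin d → ℤ // s ∉ Rgrp h k} →₀ M,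
    (∀ n ∈ Rgrp h k, (f.sum fun s v => LM (n + s.1) v) = 0) ∧
    w = f.sum fun s v => c s ⊗ₜ[ℂ] v}


/-!
Write `e_s` for `L_s ∈ g_R'` when `s ∉ R` and `e_s = 0` when `s ∈ R`, and `a(x, s)` for the
structure constant in `[L_x, L_s] = a(x, s) L_{x+s}`. Every operator then acts on pure tensors
by a single formula, `L_x (e_s ⊗ v) = a(x, s) e_{x+s} ⊗ v + e_s ⊗ L_x v` and
`t^n (e_s ⊗ v) = e_{n+s} ⊗ v`. Hence each relation of a `Zg`-module, evaluated on `e_s ⊗ v`,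
splits into the same relation in `M` and a scalar identity among the `a(x, s)`. These identities
are instances of the Jacobi identity of `g`: they follow from the linearity of `(γ|·)` and the
bimultiplicativity of `σ`, which is trivial as soon as one argument lies in `R` and symmetric
on pairs `r, s` with `r + s ∈ R`.
-/

theorem TensorProduct.ext_basis_left {R M N P ι : Type*} [CommSemiring R] [AddCommMonoid M]
    [Module R M] [AddCommMonoid N] [Module R N] [AddCommMonoid P] [Module R P]
    (b : Module.Basis ι R M) {f g : M ⊗[R] N →ₗ[R] P}
    (H : ∀ i y, f (b i ⊗ₜ y) = g (b i ⊗ₜ y)) : f = g :=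
  TensorProduct.ext (b.ext fun i => LinearMap.ext fun y => H i y)

theorem zpow_eq_one_of_pow_eq_one_of_dvd {G : Type*} [DivisionMonoid G] {x : G} {k : ℕ}
    (hx : x ^ k = 1) {a : ℤ} (ha : (k : ℤ) ∣ a) : x ^ a = 1 := by
  obtain ⟨t, rfl⟩ := ha
  rw [zpow_mul, zpow_natCast, hx, one_zpow]

theorem ginner_add {d : ℕ} (γ : Fin d → ℂ) (a b : Fin d → ℤ) :
    ginner γ (a + b) = ginner γ a + ginner γ b := by
  simp only [ginner, Pi.add_apply, Int.cast_add, mul_add, Finset.sum_add_distrib]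

theorem ginner_sub {d : ℕ} (γ : Fin d → ℂ) (a b : Fin d → ℤ) :
    ginner γ (a - b) = ginner γ a - ginner γ b := by
  simp only [ginner, Pi.sub_apply, Int.cast_sub, mul_sub, Finset.sum_sub_distrib]

section Sigma

variable {d z : ℕ} (h : 2*z ≤ d) {k : Fin z → ℕ} {q : Fin z → ℂ}

theorem qsigma_add_left (hq0 : ∀ i, q i ≠ 0) (m m' n : Fin d → ℤ) :
    qsigma h q (m + m') n = qsigma h q m n * qsigma h q m' n := by
  simp only [qsigma, ← Finset.prod_mul_distrib, Pi.add_apply, mul_add, zpow_add₀ (hq0 _)]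

theorem qsigma_add_right (hq0 : ∀ i, q i ≠ 0) (m n n' : Fin d → ℤ) :
    qsigma h q m (n + n') = qsigma h q m n * qsigma h q m n' := by
  simp only [qsigma, ← Finset.prod_mul_distrib, Pi.add_apply, add_mul, zpow_add₀ (hq0 _)]

theorem qsigma_eq_one_of_left_mem (hqk : ∀ i, q i ^ k i = 1) {m : Fin d → ℤ}
    (hm : m ∈ Rgrp h k) (n : Fin d → ℤ) : qsigma h q m n = 1 :=
  Finset.prod_eq_one fun i _ => zpow_eq_one_of_pow_eq_one_of_dvd (hqk i) ((hm i).1.mul_left _)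

theorem qsigma_eq_one_of_right_mem (hqk : ∀ i, q i ^ k i = 1) (m : Fin d → ℤ)
    {n : Fin d → ℤ} (hn : n ∈ Rgrp h k) : qsigma h q m n = 1 :=
  Finset.prod_eq_one fun i _ => zpow_eq_one_of_pow_eq_one_of_dvd (hqk i) ((hn i).2.mul_right _)

theorem qsigma_comm_of_add_mem (hq0 : ∀ i, q i ≠ 0) (hqk : ∀ i, q i ^ k i = 1)
    {r s : Fin d → ℤ} (hrs : r + s ∈ Rgrp h k) : qsigma h q r s = qsigma h q s r := by
  refine Finset.prod_congr rfl fun i _ => ?_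
  obtain ⟨h1, h2⟩ := hrs i
  rw [Pi.add_apply] at h1 h2
  rw [← div_eq_one_iff_eq (zpow_ne_zero _ (hq0 i)), ← zpow_sub₀ (hq0 i)]
  refine zpow_eq_one_of_pow_eq_one_of_dvd (hqk i) ?_
  have hdiff : s (p2 h i) * r (p1 h i) - r (p2 h i) * s (p1 h i)
      = (r (p2 h i) + s (p2 h i)) * r (p1 h i) - r (p2 h i) * (r (p1 h i) + s (p1 h i)) := by
    ring
  rw [hdiff]
  exact dvd_sub (h2.mul_right _) (h1.mul_left _)

end Sigma

section StructureConstants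

variable {d z : ℕ} (h : 2*z ≤ d) (k : Fin z → ℕ) (q : Fin z → ℂ) (γ : Fin d → ℂ)

open Classical in
/-- `[L_x, L_s] = adCoeff x s • L_{x+s}` in `g` whenever `s ∉ R`. -/
def adCoeff (x s : Fin d → ℤ) : ℂ :=
  if x ∈ Rgrp h k then ginner γ s else qsigma h q x s - qsigma h q s x

variable {h k q γ}

theorem adCoeff_of_mem {x : Fin d → ℤ} (hx : x ∈ Rgrp h k) (s : Fin d → ℤ) :
    adCoeff h k q γ x s = ginner γ s := if_pos hx

theorem adCoeff_of_not_mem {x : Fin d → ℤ} (hx : x ∉ Rgrp h k) (s : Fin d → ℤ) :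
    adCoeff h k q γ x s = qsigma h q x s - qsigma h q s x := if_neg hx

theorem adCoeff_jacobi_of_mem_of_mem {m n : Fin d → ℤ} (hm : m ∈ Rgrp h k)
    (hn : n ∈ Rgrp h k) (s : Fin d → ℤ) :
    adCoeff h k q γ n s * adCoeff h k q γ m (n + s)
        - adCoeff h k q γ m s * adCoeff h k q γ n (m + s)
      = ginner γ (n - m) * adCoeff h k q γ (m + n) s := by
  simp only [adCoeff_of_mem hm, adCoeff_of_mem hn, adCoeff_of_mem (add_mem hm hn), ginner_add,
    ginner_sub]
  ring

variable (hq0 : ∀ i, q i ≠ 0) (hqk : ∀ i, q i ^ k i = 1)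
include hq0 hqk

theorem adCoeff_jacobi_of_mem_of_not_mem {m b : Fin d → ℤ} (hm : m ∈ Rgrp h k)
    (hb : b ∉ Rgrp h k) (s : Fin d → ℤ) :
    adCoeff h k q γ b s * adCoeff h k q γ m (b + s)
        - adCoeff h k q γ m s * adCoeff h k q γ b (m + s)
      = ginner γ b * adCoeff h k q γ (m + b) s := by
  simp only [adCoeff_of_mem hm, adCoeff_of_not_mem hb, adCoeff_of_not_mem (add_not_mem_R h k hm hb),
    qsigma_add_left h hq0, qsigma_add_right h hq0, qsigma_eq_one_of_left_mem h hqk hm,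
    qsigma_eq_one_of_right_mem h hqk _ hm, ginner_add]
  ring

theorem adCoeff_jacobi_of_not_mem_of_not_mem {a b : Fin d → ℤ} (ha : a ∉ Rgrp h k)
    (hb : b ∉ Rgrp h k) (s : Fin d → ℤ) :
    adCoeff h k q γ b s * adCoeff h k q γ a (b + s)
        - adCoeff h k q γ a s * adCoeff h k q γ b (a + s)
      = (qsigma h q a b - qsigma h q b a) * adCoeff h k q γ (a + b) s := by
  simp only [adCoeff_of_not_mem ha, adCoeff_of_not_mem hb, qsigma_add_left h hq0,
    qsigma_add_right h hq0]
  by_cases hab : a + b ∈ Rgrp h k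
  · rw [qsigma_comm_of_add_mem h hq0 hqk hab, sub_self, zero_mul]
    ring
  · rw [adCoeff_of_not_mem hab, qsigma_add_left h hq0, qsigma_add_right h hq0]
    ring

theorem adCoeff_add_mem_right {x n : Fin d → ℤ} (hx : x ∉ Rgrp h k) (hn : n ∈ Rgrp h k)
    (s : Fin d → ℤ) : adCoeff h k q γ x (n + s) = adCoeff h k q γ x s := by
  rw [adCoeff_of_not_mem hx, adCoeff_of_not_mem hx, qsigma_add_left h hq0,
    qsigma_add_right h hq0, qsigma_eq_one_of_left_mem h hqk hn,
    qsigma_eq_one_of_right_mem h hqk _ hn, one_mul, one_mul]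

end StructureConstants

section TensorAction

variable {d z : ℕ} (h : 2*z ≤ d) (k : Fin z → ℕ) {q : Fin z → ℂ} {γ : Fin d → ℂ}
  {G' M : Type*} [AddCommGroup G'] [Module ℂ G'] [AddCommGroup M] [Module ℂ M]
  (c : Module.Basis {s : Fin d → ℤ // s ∉ Rgrp h k} ℂ G')

open Classical in
def basisOrZero (s : Fin d → ℤ) : G' :=
  if hs : s ∈ Rgrp h k then 0 else c ⟨s, hs⟩

variable {h k c}

theorem basisOrZero_of_mem {s : Fin d → ℤ} (hs : s ∈ Rgrp h k) : basisOrZero h k c s = 0 :=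
  dif_pos hs

theorem basisOrZero_of_not_mem {s : Fin d → ℤ} (hs : s ∉ Rgrp h k) :
    basisOrZero h k c s = c ⟨s, hs⟩ :=
  dif_neg hs

variable (c) in
theorem ext_basisOrZero_tmul {F G : Module.End ℂ (G' ⊗[ℂ] M)}
    (H : ∀ s ∉ Rgrp h k, ∀ v,
      F (basisOrZero h k c s ⊗ₜ v) = G (basisOrZero h k c s ⊗ₜ v)) :
    F = G :=
  TensorProduct.ext_basis_left c fun s v => by
    simpa only [basisOrZero_of_not_mem s.2] using H s.1 s.2 v

variable {LM : (Fin d → ℤ) → Module.End ℂ M}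
  {Lt Tt : (Fin d → ℤ) → Module.End ℂ (G' ⊗[ℂ] M)}
  (hact : TPAction h k q γ c LM Lt Tt)
include hact

theorem TPAction.lt_apply_tmul (hqk : ∀ i, q i ^ k i = 1) (x w : Fin d → ℤ) (v : M) :
    Lt x (basisOrZero h k c w ⊗ₜ v)
      = adCoeff h k q γ x w • (basisOrZero h k c (x + w) ⊗ₜ v)
        + basisOrZero h k c w ⊗ₜ LM x v := by
  obtain ⟨hRS, hSS, hSSR, -⟩ := hact
  by_cases hw : w ∈ Rgrp h k
  · rw [basisOrZero_of_mem hw, TensorProduct.zero_tmul, map_zero, TensorProduct.zero_tmul,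
      add_zero]
    by_cases hx : x ∈ Rgrp h k
    · rw [basisOrZero_of_mem (add_mem hx hw), TensorProduct.zero_tmul, smul_zero]
    · rw [adCoeff_of_not_mem hx, qsigma_eq_one_of_right_mem h hqk _ hw,
        qsigma_eq_one_of_left_mem h hqk hw, sub_self, zero_smul]
  rw [basisOrZero_of_not_mem hw]
  by_cases hx : x ∈ Rgrp h k
  · rw [hRS x hx w hw v, adCoeff_of_mem hx, basisOrZero_of_not_mem (add_not_mem_R h k hx hw)]
  by_cases hxw : x + w ∈ Rgrp h k
  · rw [hSSR x hx w hw hxw v, basisOrZero_of_mem hxw, TensorProduct.zero_tmul, smul_zero,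
      zero_add]
  · rw [hSS x hx w hw hxw v, adCoeff_of_not_mem hx, basisOrZero_of_not_mem hxw]

theorem TPAction.tt_apply_tmul {n : Fin d → ℤ} (hn : n ∈ Rgrp h k) (w : Fin d → ℤ)
    (v : M) :
    Tt n (basisOrZero h k c w ⊗ₜ v) = basisOrZero h k c (n + w) ⊗ₜ v := by
  by_cases hw : w ∈ Rgrp h k
  · rw [basisOrZero_of_mem hw, basisOrZero_of_mem (add_mem hn hw), TensorProduct.zero_tmul,
      map_zero]
  · rw [basisOrZero_of_not_mem hw, hact.2.2.2 n hn w hw v,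
      basisOrZero_of_not_mem (add_not_mem_R h k hn hw)]

theorem TPAction.lie_apply_tmul (hqk : ∀ i, q i ^ k i = 1) (x y w : Fin d → ℤ) (v : M) :
    ⁅Lt x, Lt y⁆ (basisOrZero h k c w ⊗ₜ v)
      = (adCoeff h k q γ y w * adCoeff h k q γ x (y + w)
          - adCoeff h k q γ x w * adCoeff h k q γ y (x + w))
            • (basisOrZero h k c (x + y + w) ⊗ₜ v)
        + basisOrZero h k c w ⊗ₜ ⁅LM x, LM y⁆ v := by
  have hxy : x + (y + w) = x + y + w := (add_assoc x y w).symm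
  have hyx : y + (x + w) = x + y + w := by abel
  simp only [LieRing.of_associative_ring_bracket, LinearMap.sub_apply, Module.End.mul_apply,
    hact.lt_apply_tmul hqk, map_add, map_smul, hxy, hyx, TensorProduct.tmul_sub]
  module

theorem TPAction.lie_eq_smul (hqk : ∀ i, q i ^ k i = 1) {x y : Fin d → ℤ} {C : ℂ}
    (hM : ⁅LM x, LM y⁆ = C • LM (x + y))
    (hC : ∀ s, adCoeff h k q γ y s * adCoeff h k q γ x (y + s)
        - adCoeff h k q γ x s * adCoeff h k q γ y (x + s) = C * adCoeff h k q γ (x + y) s) :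
    ⁅Lt x, Lt y⁆ = C • Lt (x + y) := by
  refine ext_basisOrZero_tmul c fun s _ v => ?_
  rw [hact.lie_apply_tmul hqk, LinearMap.smul_apply, hact.lt_apply_tmul hqk, hM,
    LinearMap.smul_apply, hC, TensorProduct.tmul_smul, add_assoc x y s]
  module

theorem TPAction.lie_tt_apply_tmul (hqk : ∀ i, q i ^ k i = 1) (x : Fin d → ℤ)
    {n : Fin d → ℤ} (hn : n ∈ Rgrp h k) (s : Fin d → ℤ) (v : M) :
    ⁅Lt x, Tt n⁆ (basisOrZero h k c s ⊗ₜ v)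
      = (adCoeff h k q γ x (n + s) - adCoeff h k q γ x s)
          • (basisOrZero h k c (x + n + s) ⊗ₜ v) := by
  have hxn : x + (n + s) = x + n + s := (add_assoc x n s).symm
  have hnx : n + (x + s) = x + n + s := by abel
  simp only [LieRing.of_associative_ring_bracket, LinearMap.sub_apply, Module.End.mul_apply,
    hact.tt_apply_tmul hn, hact.lt_apply_tmul hqk, map_add, map_smul, hxn, hnx]
  module

theorem TPAction.gRel (hq0 : ∀ i, q i ≠ 0) (hqk : ∀ i, q i ^ k i = 1)
    (hg : GRel h k q γ LM) :
    GRel h k q γ Lt := by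
  obtain ⟨hRR, hRS, hSS⟩ := hg
  refine ⟨fun m n hm hn => ?_, fun m b hm hb => ?_, fun a b ha hb => ?_⟩
  · exact hact.lie_eq_smul hqk (hRR m n hm hn) (adCoeff_jacobi_of_mem_of_mem hm hn)
  · exact hact.lie_eq_smul hqk (hRS m b hm hb)
      (adCoeff_jacobi_of_mem_of_not_mem hq0 hqk hm hb)
  · exact hact.lie_eq_smul hqk (hSS a b ha hb)
      (adCoeff_jacobi_of_not_mem_of_not_mem hq0 hqk ha hb)

theorem TPAction.zRel (hq0 : ∀ i, q i ≠ 0) (hqk : ∀ i, q i ^ k i = 1) :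
    ZRel h k γ Lt Tt := by
  refine ⟨fun m n hm hn => ?_, ?_, fun m n hm hn => ?_, fun r n hr hn => ?_⟩
  all_goals refine ext_basisOrZero_tmul c fun s _ v => ?_
  · rw [Module.End.mul_apply, hact.tt_apply_tmul hn, hact.tt_apply_tmul hm,
      hact.tt_apply_tmul (add_mem hm hn), add_assoc]
  · rw [hact.tt_apply_tmul (zero_mem _), zero_add, Module.End.one_apply]
  · rw [hact.lie_tt_apply_tmul hqk _ hn, LinearMap.smul_apply,
      hact.tt_apply_tmul (add_mem hm hn), adCoeff_of_mem hm, adCoeff_of_mem hm, ginner_add,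
      add_sub_cancel_right]
  · rw [hact.lie_tt_apply_tmul hqk _ hn, adCoeff_add_mem_right hq0 hqk hr hn, sub_self,
      zero_smul, LinearMap.zero_apply]

end TensorAction

/-- Lemma 6.2(1).  Let `M` be a cuspidal `g`-module.  The tensor
product `g_R' ⊗ M` (here `G' ⊗ M`, where `G'` is the ideal `g_R'` with basis
`{L_s : s ∉ R}`), equipped with the `g`-action `X·(y ⊗ v) = [X,y] ⊗ v + y ⊗ (X·v)` and
the `Z`-action `t^n·(L_s ⊗ v) = L_{n+s} ⊗ v`, is a `Zg`-module: the operators `Lt`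
satisfy the defining relations of `g` and the operators `(Lt, Tt)` satisfy the
relations of a `Zg`-module. -/
theorem stmt14 (d z : ℕ) (h2z : 2*z ≤ d)
    (k : Fin z → ℕ) (hk : ∀ i, 0 < k i)
    (q : Fin z → ℂ) (hq : ∀ i, IsPrimitiveRoot (q i) (k i))
    (γ : Fin d → ℂ)
    (M : Type*) [AddCommGroup M] [Module ℂ M]
    (LM : (Fin d → ℤ) → Module.End ℂ M)
    (hg : GRel h2z k q γ LM)
    (G' : Type*) [AddCommGroup G'] [Module ℂ G']
    (c : Module.Basis {s : Fin d → ℤ // s ∉ Rgrp h2z k} ℂ G')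
    (Lt Tt : (Fin d → ℤ) → Module.End ℂ (G' ⊗[ℂ] M))
    (hact : TPAction h2z k q γ c LM Lt Tt) :
    GRel h2z k q γ Lt ∧ ZRel h2z k γ Lt Tt := by
  have hq0 : ∀ i, q i ≠ 0 := fun i => (hq i).ne_zero (hk i).ne'
  have hqk : ∀ i, q i ^ k i = 1 := fun i => (hq i).pow_eq_one
  exact ⟨hact.gRel hq0 hqk hg, hact.zRel hq0 hqk⟩
end
end
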